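/- Assume p invertible in K. Set P_n^G = P_n · e_n^G, the image of the idempotent e_n^G acting on the functor P_n(V) = K[Hom(F^n,V)]. Then Hom in the functor category satisfies: Hom(P_m^G, P_n^G) ≅ K[GL_n(F)] as a K-algebra when m = n, and Hom(P_m^G, P_n^G) = 0 when m ≠ n. -/

import Mathlib

/-- The `K`-linear span of the singular `n × n` matrices inside `K[M_n(F)]`. -/
noncomputable def singSpan (K F : Type) [CommRing K] [Field F] (n : ℕ) :
    Submodule K (MonoidAlgebra K (Matrix (Fin n) (Fin n) F)) :=
  Submodule.span K
    {x | ∃ A : Matrix (Fin n) (Fin n) F, ¬ IsUnit A ∧ x = MonoidAlgebra.single A 1}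

/-- Left action of `K[M_m(F)]` on `K[M_{m,n}(F)] = Hom(P_m, P_n)` by matrix
multiplication. -/
noncomputable def lAct (K F : Type) [CommRing K] [Field F] (m n : ℕ)
    (a : MonoidAlgebra K (Matrix (Fin m) (Fin m) F))
    (x : Matrix (Fin m) (Fin n) F →₀ K) : Matrix (Fin m) (Fin n) F →₀ K :=
  Finsupp.sum a.coeff fun A c => Finsupp.sum x fun X d => Finsupp.single (A * X) (c * d)

/-- Right action of `K[M_n(F)]` on `K[M_{m,n}(F)] = Hom(P_m, P_n)` by matrix
multiplication. -/
noncomputable def rAct (K F : Type) [CommRing K] [Field F] (m n : ℕ)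
    (x : Matrix (Fin m) (Fin n) F →₀ K)
    (b : MonoidAlgebra K (Matrix (Fin n) (Fin n) F)) : Matrix (Fin m) (Fin n) F →₀ K :=
  Finsupp.sum b.coeff fun B c => Finsupp.sum x fun X d => Finsupp.single (X * B) (d * c)

lemma singSpan_eq_supported (K F : Type) [CommRing K] [Field F] (n : ℕ) :
    singSpan K F n = MonoidAlgebra.supported K K {A : Matrix (Fin n) (Fin n) F | ¬ IsUnit A} := by
  rw [MonoidAlgebra.supported_eq_span_single, singSpan]
  congr 1
  ext x
  constructor
  · rintro ⟨A, hA, rfl⟩; exact ⟨A, hA, rfl⟩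
  · rintro ⟨A, hA, rfl⟩; exact ⟨A, hA, rfl⟩

lemma mem_singSpan (K F : Type) [CommRing K] [Field F] (n : ℕ)
    (x : MonoidAlgebra K (Matrix (Fin n) (Fin n) F)) :
    x ∈ singSpan K F n ↔ ∀ A ∈ x.coeff.support, ¬ IsUnit A := by
  rw [singSpan_eq_supported, MonoidAlgebra.mem_supported]
  exact ⟨fun h A hA => h hA, fun h A hA => h A hA⟩

lemma singSpan_mul_left (K F : Type) [CommRing K] [Field F] (n : ℕ)
    (a x : MonoidAlgebra K (Matrix (Fin n) (Fin n) F)) (hx : x ∈ singSpan K F n) :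
    a * x ∈ singSpan K F n := by
  rw [mem_singSpan] at *
  intro A hA
  classical
  obtain ⟨B, hB, C, hC, rfl⟩ := Finset.mem_mul.mp (MonoidAlgebra.support_coeff_mul_subset a x hA)
  have := hx C hC
  rw [Matrix.isUnit_iff_isUnit_det, Matrix.det_mul] at *
  exact fun hu => this (isUnit_of_mul_isUnit_right hu)

lemma singSpan_mul_right (K F : Type) [CommRing K] [Field F] (n : ℕ)
    (a x : MonoidAlgebra K (Matrix (Fin n) (Fin n) F)) (hx : x ∈ singSpan K F n) :
    x * a ∈ singSpan K F n := by
  rw [mem_singSpan] at *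
  intro A hA
  classical
  obtain ⟨B, hB, C, hC, rfl⟩ := Finset.mem_mul.mp (MonoidAlgebra.support_coeff_mul_subset x a hA)
  have := hx B hB
  rw [Matrix.isUnit_iff_isUnit_det, Matrix.det_mul] at *
  exact fun hu => this (isUnit_of_mul_isUnit_left hu)

-- absorber lemma
lemma exists_singular_absorb (F : Type) [Field F] (a b : ℕ) (h : b < a)
    (X : Matrix (Fin a) (Fin b) F) :
    ∃ A : Matrix (Fin a) (Fin a) F, ¬ IsUnit A ∧ A * X = X := by
  classical
  set W := LinearMap.range (Matrix.toLin' X) with hW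
  obtain ⟨W', hc⟩ := Submodule.exists_isCompl W
  set g := W.subtype ∘ₗ (W.projectionOnto W' hc) with hg
  have hgfix : ∀ y ∈ W, g y = y := by
    intro y hy
    show W.subtype ((W.projectionOnto W' hc) y) = y
    rw [show y = ((⟨y, hy⟩ : W) : Fin a → F) from rfl,
      Submodule.projectionOnto_apply_left hc ⟨y, hy⟩]
    rfl
  refine ⟨Matrix.toLin'.symm g, ?_, ?_⟩
  · intro hu
    obtain ⟨u, hu'⟩ := hu
    have h1 : Matrix.toLin'.symm g * (↑u⁻¹ : Matrix (Fin a) (Fin a) F) = 1 := by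
      rw [← hu']; exact u.mul_inv
    have h2 : g ∘ₗ Matrix.toLin' (↑u⁻¹ : Matrix (Fin a) (Fin a) F) = LinearMap.id := by
      have := congrArg Matrix.toLin' h1
      rwa [Matrix.toLin'_mul, LinearEquiv.apply_symm_apply, Matrix.toLin'_one] at this
    have hsurj : Function.Surjective g := fun v =>
      ⟨Matrix.toLin' (↑u⁻¹ : Matrix (Fin a) (Fin a) F) v, by
        simpa using LinearMap.congr_fun h2 v⟩
    have hrange : LinearMap.range g ≤ W := by
      rintro y ⟨v, rfl⟩
      exact ((W.projectionOnto W' hc) v).2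
    have htop : W = ⊤ := top_unique ((LinearMap.range_eq_top.mpr hsurj) ▸ hrange)
    have hle : Module.finrank F W ≤ b := by
      simpa using (Matrix.toLin' X).finrank_range_le
    have heq : Module.finrank F W = a := by
      rw [htop, finrank_top]; simp
    omega
  · apply Matrix.toLin'.injective
    rw [Matrix.toLin'_mul, LinearEquiv.apply_symm_apply]
    refine LinearMap.ext fun v => ?_
    exact hgfix _ ⟨v, rfl⟩


section Act
variable (K F : Type) [CommRing K] [Field F] (m n : ℕ)

lemma lAct_single_single (A : Matrix (Fin m) (Fin m) F) (c : K)
    (X : Matrix (Fin m) (Fin n) F) (d : K) :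
    lAct K F m n (MonoidAlgebra.single A c) (Finsupp.single X d) =
      Finsupp.single (A * X) (c * d) := by
  classical
  unfold lAct MonoidAlgebra.single
  rw [Finsupp.sum_single_index, Finsupp.sum_single_index] <;>
    simp [Finsupp.sum_single_index]

lemma rAct_single_single (X : Matrix (Fin m) (Fin n) F) (d : K)
    (B : Matrix (Fin n) (Fin n) F) (c : K) :
    rAct K F m n (Finsupp.single X d) (MonoidAlgebra.single B c) =
      Finsupp.single (X * B) (d * c) := by
  classical
  unfold rAct MonoidAlgebra.single
  rw [Finsupp.sum_single_index, Finsupp.sum_single_index] <;>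
    simp [Finsupp.sum_single_index]

lemma lAct_zero_right (a : MonoidAlgebra K (Matrix (Fin m) (Fin m) F)) :
    lAct K F m n a 0 = 0 := by
  simp [lAct]

lemma rAct_zero_left (b : MonoidAlgebra K (Matrix (Fin n) (Fin n) F)) :
    rAct K F m n 0 b = 0 := by
  simp [rAct]

lemma lAct_add_right (a : MonoidAlgebra K (Matrix (Fin m) (Fin m) F))
    (x y : Matrix (Fin m) (Fin n) F →₀ K) :
    lAct K F m n a (x + y) = lAct K F m n a x + lAct K F m n a y := by
  classical
  unfold lAct
  rw [← Finsupp.sum_add]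
  refine Finsupp.sum_congr fun A hA => ?_
  rw [Finsupp.sum_add_index] <;> simp [mul_add]

lemma rAct_add_left (x y : Matrix (Fin m) (Fin n) F →₀ K)
    (b : MonoidAlgebra K (Matrix (Fin n) (Fin n) F)) :
    rAct K F m n (x + y) b = rAct K F m n x b + rAct K F m n y b := by
  classical
  unfold rAct
  rw [← Finsupp.sum_add]
  refine Finsupp.sum_congr fun B hB => ?_
  rw [Finsupp.sum_add_index] <;> simp [add_mul]

lemma lAct_sub_left (a a' : MonoidAlgebra K (Matrix (Fin m) (Fin m) F))
    (x : Matrix (Fin m) (Fin n) F →₀ K) :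
    lAct K F m n (a - a') x = lAct K F m n a x - lAct K F m n a' x := by
  unfold lAct
  rw [show (a - a').coeff = a.coeff - a'.coeff from rfl]
  apply Finsupp.sum_sub_index
  intro A c₁ c₂
  rw [← Finsupp.sum_sub]
  refine Finsupp.sum_congr fun X hX => ?_
  rw [sub_mul, Finsupp.single_sub]

lemma rAct_sub_right (x : Matrix (Fin m) (Fin n) F →₀ K)
    (b b' : MonoidAlgebra K (Matrix (Fin n) (Fin n) F)) :
    rAct K F m n x (b - b') = rAct K F m n x b - rAct K F m n x b' := by
  unfold rAct
  rw [show (b - b').coeff = b.coeff - b'.coeff from rfl]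
  apply Finsupp.sum_sub_index
  intro B c₁ c₂
  rw [← Finsupp.sum_sub]
  refine Finsupp.sum_congr fun X hX => ?_
  rw [mul_sub, Finsupp.single_sub]

lemma lAct_one_single (X : Matrix (Fin m) (Fin n) F) (d : K) :
    lAct K F m n 1 (Finsupp.single X d) = Finsupp.single X d := by
  rw [MonoidAlgebra.one_def, lAct_single_single, Matrix.one_mul, one_mul]

lemma rAct_single_one (X : Matrix (Fin m) (Fin n) F) (d : K) :
    rAct K F m n (Finsupp.single X d) 1 = Finsupp.single X d := by
  rw [MonoidAlgebra.one_def, rAct_single_single, Matrix.mul_one, mul_one]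

lemma lAct_mul_single (u : MonoidAlgebra K (Matrix (Fin m) (Fin m) F))
    (A : Matrix (Fin m) (Fin m) F) (X : Matrix (Fin m) (Fin n) F) (d : K) :
    lAct K F m n (u * MonoidAlgebra.single A 1) (Finsupp.single X d) =
      lAct K F m n u (Finsupp.single (A * X) d) := by
  classical
  have hmul : u * MonoidAlgebra.single A 1 =
      Finsupp.sum u.coeff fun B c => MonoidAlgebra.single (B * A) c := by
    rw [MonoidAlgebra.mul_def]
    congr 1
    funext B c
    rw [MonoidAlgebra.coeff_single, Finsupp.sum_single_index] <;> simp
  rw [hmul]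
  unfold lAct
  simp only [MonoidAlgebra.coeff_finsuppSum, MonoidAlgebra.coeff_single]
  rw [Finsupp.sum_sum_index]
  · refine Finsupp.sum_congr fun B hB => ?_
    rw [Finsupp.sum_single_index, Finsupp.sum_single_index, Matrix.mul_assoc] <;> simp
  · intro B
    simp [Finsupp.sum_single_index]
  · intro B c₁ c₂
    rw [← Finsupp.sum_add]
    refine Finsupp.sum_congr fun X' hX' => ?_
    rw [add_mul, Finsupp.single_add]

lemma rAct_single_mul (v : MonoidAlgebra K (Matrix (Fin n) (Fin n) F))
    (B : Matrix (Fin n) (Fin n) F) (X : Matrix (Fin m) (Fin n) F) (d : K) :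
    rAct K F m n (Finsupp.single X d) (MonoidAlgebra.single B 1 * v) =
      rAct K F m n (Finsupp.single (X * B) d) v := by
  classical
  have hmul : MonoidAlgebra.single B 1 * v =
      Finsupp.sum v.coeff fun B' c => MonoidAlgebra.single (B * B') c := by
    rw [MonoidAlgebra.mul_def]
    rw [MonoidAlgebra.coeff_single, Finsupp.sum_single_index]
    · simp
    · simp [Finsupp.sum]
  rw [hmul]
  unfold rAct
  simp only [MonoidAlgebra.coeff_finsuppSum, MonoidAlgebra.coeff_single]
  rw [Finsupp.sum_sum_index]
  · refine Finsupp.sum_congr fun B' hB' => ?_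
    rw [Finsupp.sum_single_index, Finsupp.sum_single_index, ← Matrix.mul_assoc] <;> simp
  · intro B'
    simp [Finsupp.sum_single_index]
  · intro B' c₁ c₂
    rw [← Finsupp.sum_add]
    refine Finsupp.sum_congr fun X' hX' => ?_
    rw [mul_add, Finsupp.single_add]

end Act

lemma corner_mul {R : Type} [Ring R] (e x y : R) (he : e * e = e)
    (hz : (1 - e) * (x * (e * y)) = 0) :
    ((1 - e) * x * (1 - e)) * ((1 - e) * y * (1 - e)) = (1 - e) * (x * y) * (1 - e) := by
  have A2 : (1 - e) * (1 - e) = 1 - e := by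
    rw [mul_sub, mul_one, sub_mul, one_mul, he, sub_self, sub_zero]
  have A1 : ((1 - e) * x * (1 - e)) * ((1 - e) * y * (1 - e)) =
      (1 - e) * x * ((1 - e) * (1 - e)) * y * (1 - e) := by noncomm_ring
  have A3 : (1 - e) * x * (1 - e) * y * (1 - e) =
      (1 - e) * (x * y) * (1 - e) - ((1 - e) * (x * (e * y))) * (1 - e) := by noncomm_ring
  rw [A1, A2, A3, hz, zero_mul, sub_zero]


/-- With `p` invertible in `K` and `e_k^G = 1 - e_k^S` the complements of the
Kovács idempotents: `Hom(P_n^G, P_n^G) = e_n^G K[M_n(F)] e_n^G ≅ K[GL_n(F)]`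
as a `K`-algebra, and `Hom(P_m^G, P_n^G) = e_m^G K[M_{m,n}(F)] e_n^G = 0`
for `m ≠ n`. -/
theorem hom_between_corner_projectives
    (K F : Type) [CommRing K] [Field F] [Fintype F]
    (p : ℕ) [CharP F p] (hp : IsUnit (p : K)) (m n : ℕ)
    (eSm : MonoidAlgebra K (Matrix (Fin m) (Fin m) F))
    (heSm : eSm ∈ singSpan K F m) (heSme : eSm * eSm = eSm)
    (heSmu : ∀ x ∈ singSpan K F m, eSm * x = x ∧ x * eSm = x)
    (eSn : MonoidAlgebra K (Matrix (Fin n) (Fin n) F))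
    (heSn : eSn ∈ singSpan K F n) (heSne : eSn * eSn = eSn)
    (heSnu : ∀ x ∈ singSpan K F n, eSn * x = x ∧ x * eSn = x) :
    (∃ φ : MonoidAlgebra K (GL (Fin n) F) →ₗ[K]
        MonoidAlgebra K (Matrix (Fin n) (Fin n) F),
      Function.Injective φ ∧
      (∀ a b, φ (a * b) = φ a * φ b) ∧
      φ 1 = 1 - eSn ∧
      (LinearMap.range φ : Set (MonoidAlgebra K (Matrix (Fin n) (Fin n) F))) =
        {y | ∃ x, y = (1 - eSn) * x * (1 - eSn)}) ∧
    (m ≠ n → ∀ x : Matrix (Fin m) (Fin n) F →₀ K,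
      lAct K F m n (1 - eSm) (rAct K F m n x (1 - eSn)) = 0) := by
  classical
  constructor
  · -- Part 1
    set πl : MonoidAlgebra K (GL (Fin n) F) →ₗ[K] MonoidAlgebra K (Matrix (Fin n) (Fin n) F) :=
      MonoidAlgebra.mapDomainLinearMap K K (Units.coeHom (Matrix (Fin n) (Fin n) F)) with hπldef
    have hπl : ∀ u, πl u = MonoidAlgebra.mapDomain (Units.coeHom (Matrix (Fin n) (Fin n) F)) u := fun u => rfl
    have hπsupp : ∀ u, ∀ A ∈ (πl u).coeff.support, IsUnit A := by
      intro u A hA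
      rw [hπl] at hA
      obtain ⟨g, _, rfl⟩ := Finset.mem_image.mp (Finsupp.mapDomain_support hA)
      exact Units.isUnit g
    have hπinj : Function.Injective πl := by
      intro u v huv
      rw [hπl, hπl] at huv
      exact MonoidAlgebra.mapDomain_injective (fun a b h => Units.ext h : Function.Injective (Units.coeHom (Matrix (Fin n) (Fin n) F))) huv
    have hπmul : ∀ a b, πl (a * b) = πl a * πl b := by
      intro a b
      rw [hπl, hπl, hπl]
      exact MonoidAlgebra.mapDomain_mul (Units.coeHom (Matrix (Fin n) (Fin n) F)) a b
    have hπone : πl 1 = 1 := by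
      rw [hπl]; exact MonoidAlgebra.mapDomain_one (Units.coeHom (Matrix (Fin n) (Fin n) F))
    have hgl : ∀ x ∈ singSpan K F n, (1 - eSn) * x = 0 := fun x hx => by
      rw [sub_mul, one_mul, (heSnu x hx).1, sub_self]
    set φ : MonoidAlgebra K (GL (Fin n) F) →ₗ[K] MonoidAlgebra K (Matrix (Fin n) (Fin n) F) :=
      { toFun := fun u => (1 - eSn) * πl u * (1 - eSn)
        map_add' := fun u v => by simp only [map_add]; noncomm_ring
        map_smul' := fun c u => by
          simp only [map_smul, RingHom.id_apply, Algebra.mul_smul_comm,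
            Algebra.smul_mul_assoc] } with hφdef
    have hφ : ∀ u, φ u = (1 - eSn) * πl u * (1 - eSn) := fun u => rfl
    refine ⟨φ, ?_, ?_, ?_, ?_⟩
    · -- injectivity
      intro u v huv
      rw [hφ, hφ] at huv
      have hmem : πl (u - v) ∈ singSpan K F n := by
        have h0 : (1 - eSn) * πl (u - v) * (1 - eSn) = 0 := by
          have hd : (1 - eSn) * (πl u - πl v) * (1 - eSn) =
              (1 - eSn) * πl u * (1 - eSn) - (1 - eSn) * πl v * (1 - eSn) := by
            noncomm_ring
          rw [map_sub, hd, huv, sub_self]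
        set x := πl (u - v) with hx0
        have hx : x = eSn * x + x * eSn - eSn * (x * eSn) := by
          have hexp : (1 - eSn) * x * (1 - eSn) =
              x - (eSn * x + x * eSn - eSn * (x * eSn)) := by noncomm_ring
          rw [hexp] at h0
          exact (sub_eq_zero.mp h0)
        rw [hx]
        exact Submodule.sub_mem _
          (Submodule.add_mem _ (singSpan_mul_right K F n x eSn heSn)
            (singSpan_mul_left K F n x eSn heSn))
          (singSpan_mul_right K F n (x * eSn) eSn heSn)
      have hz : πl (u - v) = 0 := by
        rw [mem_singSpan] at hmem
        have hsupp := hπsupp (u - v)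
        exact MonoidAlgebra.coeff_eq_zero.mp (Finsupp.support_eq_empty.mp
          (Finset.eq_empty_of_forall_notMem fun A hA => hmem A hA (hsupp A hA)))
      have h5 : u - v = 0 := hπinj (by rw [hz, map_zero])
      exact sub_eq_zero.mp h5
    · -- multiplicativity
      intro a b
      rw [hφ, hφ, hφ, hπmul]
      exact (corner_mul eSn (πl a) (πl b) heSne
        (hgl _ (singSpan_mul_left K F n (πl a) (eSn * πl b)
          (singSpan_mul_right K F n (πl b) eSn heSn)))).symm
    · -- unit
      rw [hφ, hπone, mul_one, mul_sub, mul_one, sub_mul, one_mul, heSne, sub_self,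
        sub_zero]
    · -- range
      ext y
      simp only [SetLike.mem_coe, LinearMap.mem_range, Set.mem_setOf_eq]
      constructor
      · rintro ⟨u, rfl⟩
        exact ⟨πl u, hφ u⟩
      · rintro ⟨x, rfl⟩
        have lift : ∀ z : MonoidAlgebra K (Matrix (Fin n) (Fin n) F), (∀ A ∈ z.coeff.support, IsUnit A) →
            ∃ u, πl u = z := by
          intro z
          refine MonoidAlgebra.induction z (fun _ => ⟨0, map_zero _⟩) ?_
          intro A c f hAf hc ih hsupp
          have hA : IsUnit A := hsupp A (by
            rw [MonoidAlgebra.coeff_add, MonoidAlgebra.coeff_single, Finsupp.mem_support_iff, Finsupp.add_apply, Finsupp.single_apply,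
              if_pos rfl, Finsupp.notMem_support_iff.mp hAf, add_zero]
            exact hc)
          obtain ⟨g, hg⟩ : ∃ g : GL (Fin n) F,
              Units.coeHom (Matrix (Fin n) (Fin n) F) g = A := hA
          obtain ⟨u', hu'⟩ := ih (fun A' hA' => hsupp A' (by
            have hne : A ≠ A' := fun h => hAf (h ▸ hA')
            rw [MonoidAlgebra.coeff_add, MonoidAlgebra.coeff_single, Finsupp.mem_support_iff, Finsupp.add_apply, Finsupp.single_apply,
              if_neg hne, zero_add]
            exact Finsupp.mem_support_iff.mp hA'))
          refine ⟨MonoidAlgebra.single g c + u', ?_⟩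
          rw [map_add, hu']
          congr 1
          rw [hπl]
          erw [MonoidAlgebra.mapDomain_single]
          rw [hg]
        set xi := MonoidAlgebra.ofCoeff (x.coeff.filter (fun A => IsUnit A)) with hxi
        set xs := MonoidAlgebra.ofCoeff (x.coeff.filter (fun A => ¬ IsUnit A)) with hxs
        have hsum : xi + xs = x := MonoidAlgebra.coeff_injective (Finsupp.filter_pos_add_filter_neg x.coeff _)
        have hxsmem : xs ∈ singSpan K F n := by
          rw [mem_singSpan]
          intro A hA
          rw [hxs, MonoidAlgebra.coeff_ofCoeff, Finsupp.support_filter] at hA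
          exact (Finset.mem_filter.mp hA).2
        obtain ⟨u, hu⟩ := lift xi (fun A hA => by
          rw [hxi, MonoidAlgebra.coeff_ofCoeff, Finsupp.support_filter] at hA
          exact (Finset.mem_filter.mp hA).2)
        refine ⟨u, ?_⟩
        rw [hφ, hu]
        conv_rhs => rw [← hsum]
        rw [mul_add, hgl xs hxsmem, add_zero]
  · -- Part 2
    intro hmn x
    rcases lt_or_gt_of_ne hmn with hlt | hgt
    · have key : ∀ y : Matrix (Fin m) (Fin n) F →₀ K,
          rAct K F m n y (1 - eSn) = 0 := by
        intro y
        refine Finsupp.induction y (by rw [rAct_zero_left]) ?_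
        intro X d f hXf hd ih
        rw [rAct_add_left, ih, add_zero, rAct_sub_right, rAct_single_one]
        obtain ⟨A, hA, hAX⟩ := exists_singular_absorb F n m hlt X.transpose
        have hBs : ¬ IsUnit A.transpose := fun h => hA (by
          rwa [Matrix.isUnit_iff_isUnit_det, Matrix.det_transpose,
            ← Matrix.isUnit_iff_isUnit_det] at h)
        have hXB : X * A.transpose = X := by
          have h' := congrArg Matrix.transpose hAX
          rwa [Matrix.transpose_mul, Matrix.transpose_transpose] at h'
        have hmem : MonoidAlgebra.single (A.transpose) (1 : K) ∈ singSpan K F n :=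
          Submodule.subset_span ⟨A.transpose, hBs, rfl⟩
        have h2 : MonoidAlgebra.single (A.transpose) (1 : K) * eSn =
            MonoidAlgebra.single (A.transpose) 1 := (heSnu _ hmem).2
        have h3 : rAct K F m n (Finsupp.single X d) eSn = Finsupp.single X d := by
          conv_lhs => rw [← hXB]
          rw [← rAct_single_mul, h2, rAct_single_single, mul_one, hXB]
        rw [h3, sub_self]
      rw [key, lAct_zero_right]
    · have key : ∀ y : Matrix (Fin m) (Fin n) F →₀ K,
          lAct K F m n (1 - eSm) y = 0 := by
        intro y
        refine Finsupp.induction y (by rw [lAct_zero_right]) ?_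
        intro X d f hXf hd ih
        rw [lAct_add_right, ih, add_zero, lAct_sub_left, lAct_one_single]
        obtain ⟨A, hA, hAX⟩ := exists_singular_absorb F m n hgt X
        have hmem : MonoidAlgebra.single A (1 : K) ∈ singSpan K F m :=
          Submodule.subset_span ⟨A, hA, rfl⟩
        have h2 : eSm * MonoidAlgebra.single A 1 = MonoidAlgebra.single A 1 :=
          (heSmu _ hmem).1
        have h3 : lAct K F m n eSm (Finsupp.single X d) = Finsupp.single X d := by
          conv_lhs => rw [← hAX]
          rw [← lAct_mul_single, h2, lAct_single_single, one_mul, hAX]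
        rw [h3, sub_self]
      exact key _
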